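/- arXiv:2107.07847 — 3 statements merged into one kernel-verified Lean document; each statement's English description precedes it below -/
import Mathlib

section
/- Let h : S¹ → ℝ be Lipschitz and let B ⊆ S¹ be a set of full Lebesgue measure. Then for every ε > 0 there exist t₁, t₂ ∈ B with 0 < d(t₁, t₂) < ε and h(t₁) = h(t₂). -/
open MeasureTheory Filter Set
open scoped ENNReal NNReal

/-- A Lipschitz map `ℝ → ℝ` sends null sets to null sets. -/
lemma aux_lip_null {f : ℝ → ℝ} {K : NNReal} (hf : LipschitzWith K f) {N : Set ℝ}
    (hN : volume N = 0) : volume (f '' N) = 0 := by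
  have h := hf.hausdorffMeasure_image_le zero_le_one N
  rw [MeasureTheory.hausdorffMeasure_real] at h
  simp [hN] at h
  simpa using h

/-- A conull set contains two distinct points in any nonempty open interval. -/
lemma aux_two_points {A : Set ℝ} (hA : volume Aᶜ = 0) {p q : ℝ} (hpq : p < q) :
    ∃ s ∈ A ∩ Ioo p q, ∃ t ∈ A ∩ Ioo p q, s ≠ t := by
  have hpos : (0 : ℝ≥0∞) < volume (A ∩ Ioo p q) := by
    rcases eq_or_ne (volume (A ∩ Ioo p q)) 0 with h0 | h0
    · exfalso
      have : volume (Ioo p q) ≤ volume (A ∩ Ioo p q) + volume Aᶜ := by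
        refine le_trans (measure_mono ?_) (measure_union_le _ _)
        intro x hx
        by_cases hxA : x ∈ A
        · exact Or.inl ⟨hxA, hx⟩
        · exact Or.inr hxA
      rw [h0, hA, add_zero, Real.volume_Ioo] at this
      simp only [nonpos_iff_eq_zero, ENNReal.ofReal_eq_zero] at this
      linarith
    · exact pos_iff_ne_zero.mpr h0
  obtain ⟨s, hs⟩ := nonempty_of_measure_ne_zero hpos.ne'
  have hpos2 : volume ((A ∩ Ioo p q) \ {s}) ≠ 0 := by
    rw [measure_diff_null (by simp)]
    exact hpos.ne'
  obtain ⟨t, ht⟩ := nonempty_of_measure_ne_zero hpos2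
  exact ⟨s, hs, t, ht.1, fun h => ht.2 (by simp [h.symm])⟩

/-- Core lemma: two adjacent intervals whose images both contain a common nondegenerate
interval yield two distinct points of a conull set with equal values. -/
lemma aux_core {f : ℝ → ℝ} {K : NNReal} (hf : LipschitzWith K f) {A : Set ℝ}
    (hA : volume Aᶜ = 0) {a m b u v : ℝ} (ham : a ≤ m) (hmb : m ≤ b) (huv : u < v)
    (h1 : Icc u v ⊆ f '' Icc a m) (h2 : Icc u v ⊆ f '' Icc m b) :
    ∃ s ∈ A ∩ Icc a b, ∃ t ∈ A ∩ Icc a b, s ≠ t ∧ f s = f t := by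
  have hN1 : volume (f '' (Icc a m \ A)) = 0 :=
    aux_lip_null hf (measure_mono_null (fun x hx => hx.2) hA)
  have hN2 : volume (f '' (Icc m b \ A)) = 0 :=
    aux_lip_null hf (measure_mono_null (fun x hx => hx.2) hA)
  have hBad : volume (f '' (Icc a m \ A) ∪ (f '' (Icc m b \ A) ∪ {f m})) = 0 := by
    refine measure_union_null hN1 (measure_union_null hN2 (by simp))
  have hEx : (Ioo u v \ (f '' (Icc a m \ A) ∪ (f '' (Icc m b \ A) ∪ {f m}))).Nonempty := by
    apply nonempty_of_measure_ne_zero (μ := volume)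
    rw [measure_diff_null hBad, Real.volume_Ioo]
    simp only [ne_eq, ENNReal.ofReal_eq_zero, not_le]
    linarith
  obtain ⟨y, hy, hyBad⟩ := hEx
  simp only [mem_union, mem_singleton_iff, not_or] at hyBad
  obtain ⟨s, hs, hfs⟩ := h1 (Ioo_subset_Icc_self hy)
  obtain ⟨t, ht, hft⟩ := h2 (Ioo_subset_Icc_self hy)
  have hsA : s ∈ A := by
    by_contra hc
    exact hyBad.1 ⟨s, ⟨hs, hc⟩, hfs⟩
  have htA : t ∈ A := by
    by_contra hc
    exact hyBad.2.1 ⟨t, ⟨ht, hc⟩, hft⟩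
  refine ⟨s, ⟨hsA, hs.1, hs.2.trans hmb⟩, t, ⟨htA, ham.trans ht.1, ht.2⟩, ?_, by rw [hfs, hft]⟩
  intro hst
  have hsm : s = m := le_antisymm hs.2 (hst ▸ ht.1)
  exact hyBad.2.2 (by rw [← hfs, hsm])

/-- If the maximum of `f` on `[p,q]` is attained at both endpoints, we find a pair. -/
lemma aux_half {f : ℝ → ℝ} {K : NNReal} (hf : LipschitzWith K f) {A : Set ℝ}
    (hA : volume Aᶜ = 0) {p q : ℝ} (hpq : p < q)
    (hmax : ∀ x ∈ Icc p q, f x ≤ f p) (heq : f q = f p) :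
    ∃ s ∈ A ∩ Icc p q, ∃ t ∈ A ∩ Icc p q, s ≠ t ∧ f s = f t := by
  obtain ⟨z, hz, hzmin⟩ := isCompact_Icc.exists_isMinOn (nonempty_Icc.2 hpq.le)
    hf.continuous.continuousOn
  rcases eq_or_lt_of_le (isMinOn_iff.mp hzmin p (left_mem_Icc.2 hpq.le)) with hc | hc
  · -- f is constant on [p,q]
    obtain ⟨s, hs, t, ht, hst⟩ := aux_two_points hA hpq
    have hval : ∀ x ∈ Ioo p q, f x = f p := fun x hx =>
      le_antisymm (hmax x (Ioo_subset_Icc_self hx))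
        (hc ▸ isMinOn_iff.mp hzmin x (Ioo_subset_Icc_self hx))
    exact ⟨s, ⟨hs.1, Ioo_subset_Icc_self hs.2⟩, t, ⟨ht.1, Ioo_subset_Icc_self ht.2⟩, hst,
      by rw [hval s hs.2, hval t ht.2]⟩
  · -- interior strict minimum at z
    have hzp : p ≤ z := hz.1
    have hzq : z ≤ q := hz.2
    refine aux_core hf hA hzp hzq hc ?_ ?_
    · exact fun y hy => intermediate_value_Icc' hzp hf.continuous.continuousOn hy
    · intro y hy
      exact intermediate_value_Icc hzq hf.continuous.continuousOn (by rwa [heq])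

/-- Main lemma on `ℝ`: if `f` attains a global maximum at `x₀`, then near `x₀` we find two
distinct points of a conull set with equal values. -/
lemma aux_main {f : ℝ → ℝ} {K : NNReal} (hf : LipschitzWith K f) {A : Set ℝ}
    (hA : volume Aᶜ = 0) {x₀ : ℝ} (hmax : ∀ x, f x ≤ f x₀) {δ : ℝ} (hδ : 0 < δ) :
    ∃ s ∈ A, ∃ t ∈ A, s ≠ t ∧ |s - t| ≤ 2 * δ ∧ f s = f t := by
  set a := x₀ - δ with ha
  set b := x₀ + δ with hb
  have hax : a < x₀ := by simp [ha]; linarith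
  have hxb : x₀ < b := by simp [hb]; linarith
  have key : ∃ s ∈ A ∩ Icc a b, ∃ t ∈ A ∩ Icc a b, s ≠ t ∧ f s = f t := by
    rcases eq_or_lt_of_le (hmax a) with hfa | hfa
    · -- max attained at a as well; work on [a, x₀]
      obtain ⟨s, hs, t, ht, hst, hfst⟩ := aux_half hf hA hax
        (fun x _ => le_of_le_of_eq (hmax x) hfa.symm) hfa.symm
      exact ⟨s, ⟨hs.1, hs.2.1, hs.2.2.trans hxb.le⟩,
        t, ⟨ht.1, ht.2.1, ht.2.2.trans hxb.le⟩, hst, hfst⟩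
    rcases eq_or_lt_of_le (hmax b) with hfb | hfb
    · -- max attained at b as well; work on [x₀, b]
      obtain ⟨s, hs, t, ht, hst, hfst⟩ := aux_half hf hA hxb (fun x _ => hmax x) hfb
      exact ⟨s, ⟨hs.1, hax.le.trans hs.2.1, hs.2.2⟩,
        t, ⟨ht.1, hax.le.trans ht.2.1, ht.2.2⟩, hst, hfst⟩
    · -- strict max in the interior
      refine aux_core hf hA hax.le hxb.le (max_lt hfa hfb) ?_ ?_
      · intro y hy
        exact intermediate_value_Icc hax.le hf.continuous.continuousOn
          ⟨(le_max_left _ _).trans hy.1, hy.2⟩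
      · intro y hy
        exact intermediate_value_Icc' hxb.le hf.continuous.continuousOn
          ⟨(le_max_right _ _).trans hy.1, hy.2⟩
  obtain ⟨s, hs, t, ht, hst, hfst⟩ := key
  refine ⟨s, hs.1, t, ht.1, hst, ?_, hfst⟩
  rw [abs_sub_le_iff]
  constructor <;> [skip; skip] <;>
    · have h1 := hs.2.1; have h2 := hs.2.2; have h3 := ht.2.1; have h4 := ht.2.2
      simp only [ha, hb] at h1 h2 h3 h4; linarith

/-- Claim 3: For a Lipschitz `h` on the circle and a full-measure set `B`,
for every `ε > 0` there are distinct points `t₁, t₂ ∈ B` at distance less than `ε`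
with `h t₁ = h t₂`. -/
theorem stmt_1 (h : UnitAddCircle → ℝ) (K : NNReal) (hLip : LipschitzWith K h)
    (B : Set UnitAddCircle) (hB : volume Bᶜ = 0) :
    ∀ ε > (0 : ℝ), ∃ t₁ ∈ B, ∃ t₂ ∈ B, 0 < dist t₁ t₂ ∧ dist t₁ t₂ < ε ∧ h t₁ = h t₂ := by
  intro ε hε
  set f : ℝ → ℝ := fun x => h (x : UnitAddCircle) with hfdef
  have hcoeLip : LipschitzWith 1 (fun x : ℝ => (x : UnitAddCircle)) := by
    apply LipschitzWith.mk_one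
    intro x y
    rw [dist_eq_norm, dist_eq_norm, ← AddCircle.coe_sub]
    exact QuotientAddGroup.norm_mk_le_norm (S := AddSubgroup.zmultiples (1:ℝ)) (m := x - y)
  have hfLip : LipschitzWith K f := by
    exact (mul_one K) ▸ (hLip.comp hcoeLip : LipschitzWith (K * 1) f)
  set A : Set ℝ := (fun x : ℝ => (x : UnitAddCircle)) ⁻¹' B with hAdef
  have hA : volume Aᶜ = 0 := by
    have hcover : Aᶜ = ⋃ n : ℤ, Aᶜ ∩ Ioc ((n : ℝ)) ((n : ℝ) + 1) := by
      rw [← inter_iUnion]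
      have : (⋃ n : ℤ, Ioc ((n : ℝ)) ((n : ℝ) + 1)) = univ := by
        have := iUnion_Ioc_add_intCast (0 : ℝ)
        simpa using this
      rw [this, inter_univ]
    rw [hcover]
    apply measure_iUnion_null
    intro n
    have hmp := (UnitAddCircle.measurePreserving_mk (n : ℝ)).quasiMeasurePreserving
    have hnull : (volume.restrict (Ioc ((n : ℝ)) ((n : ℝ) + 1)))
        ((fun x : ℝ => (x : UnitAddCircle)) ⁻¹' Bᶜ) = 0 := hmp.preimage_null hB
    rw [Measure.restrict_apply' measurableSet_Ioc] at hnull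
    have : Aᶜ = (fun x : ℝ => (x : UnitAddCircle)) ⁻¹' Bᶜ := rfl
    rw [this]
    exact hnull
  -- global maximum
  obtain ⟨x₀, hx₀mem, hx₀⟩ := isCompact_Icc.exists_isMaxOn (nonempty_Icc.2 zero_le_one)
    hfLip.continuous.continuousOn
  have hfract : ∀ x : ℝ, ((Int.fract x : ℝ) : UnitAddCircle) = ↑x := by
    intro x
    rw [Int.fract, AddCircle.coe_sub]
    have hz : (((⌊x⌋ : ℝ)) : UnitAddCircle) = 0 := by
      rw [AddCircle.coe_eq_zero_iff]; exact ⟨⌊x⌋, by simp⟩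
    rw [hz, sub_zero]
  have hmax : ∀ x, f x ≤ f x₀ := by
    intro x
    have h1 : f x = f (Int.fract x) := by
      simp only [hfdef]
      rw [hfract x]
    rw [h1]
    exact hx₀ ⟨Int.fract_nonneg x, (Int.fract_lt_one x).le⟩
  -- choose δ
  set δ : ℝ := min ε 1 / 8 with hδdef
  have hδpos : 0 < δ := by
    have : 0 < min ε 1 := lt_min hε one_pos
    simp only [hδdef]; linarith
  have h2δ : 2 * δ ≤ min ε 1 / 4 := by simp only [hδdef]; linarith
  obtain ⟨s, hsA, t, htA, hst, hdist, hfst⟩ := aux_main hfLip hA hmax hδpos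
  have habs : |s - t| < 1 / 2 := by
    have h1 : min ε 1 / 4 ≤ 1 / 4 := by
      have := min_le_right ε 1; linarith
    calc |s - t| ≤ 2 * δ := hdist
      _ ≤ 1 / 4 := h2δ.trans h1
      _ < 1 / 2 := by norm_num
  have hdisteq : dist ((s : UnitAddCircle)) ((t : UnitAddCircle)) = |s - t| := by
    rw [dist_eq_norm, ← AddCircle.coe_sub]
    exact (AddCircle.norm_coe_eq_abs_iff (p := 1) one_ne_zero).mpr (by rw [abs_one]; linarith)
  refine ⟨(s : UnitAddCircle), hsA, (t : UnitAddCircle), htA, ?_, ?_, hfst⟩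
  · rw [hdisteq]
    exact abs_pos.mpr (sub_ne_zero.mpr hst)
  · rw [hdisteq]
    have : min ε 1 ≤ ε := min_le_left _ _
    calc |s - t| ≤ 2 * δ := hdist
      _ ≤ min ε 1 / 4 := h2δ
      _ < ε := by linarith [lt_min hε one_pos]
end

section
/- There does not exist a non-constant Lipschitz function h : S¹ → ℝ with the property that for every ε > 0, all pairs t₁ ≠ t₂ with d(t₁,t₂) < ε and h(t₁) = h(t₂) found in a fixed full-measure set B generate, via the irrational rotation closure argument, periods of h. Equivalently (Proposition 4.1 of the paper): if α is irrational, h : S¹ → ℝ is Lipschitz, and for ν = h_* Leb almost every y ∈ ℝ the conditional measures of Leb with respect to h make h ∘ R_α constant almost surely, then h is constant. -/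
/-!
Averaging `h (· + α)` over the conditional measures gives a factor map `ψ` with
`h (t + α) = ψ (h t)` for a.e. `t`, hence `h (t + n α) = ψ^[n] (h t)` for all `n` on a set `F` of
full measure. If `t, s ∈ F` and `h t = h s`, then `h` agrees along the orbits of `t` and `s`; the
orbit of `t` is dense, so `s - t` is a period of `h`.

On the other hand, a nonconstant continuous periodic function on `ℝ` has a least positive period
`τ`, and every value strictly between its minimum and its maximum is taken at two points less than
`τ` apart. As `h` is Lipschitz, `h '' Fᶜ` is null, so such a value can be chosen with both points
in `F`, which produces a period in `(0, τ)`.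
-/

open MeasureTheory Filter

open Function Set

theorem AddCircle.lipschitzWith_coe (T : ℝ) : LipschitzWith 1 ((↑) : ℝ → AddCircle T) :=
  LipschitzWith.of_dist_le_mul fun x y => by
    rw [NNReal.coe_one, one_mul, dist_eq_norm, dist_eq_norm, ← AddCircle.coe_sub]
    exact QuotientAddGroup.norm_mk_le_norm

theorem LipschitzOnWith.volume_image_null {K : NNReal} {f : ℝ → ℝ} {s : Set ℝ}
    (hf : LipschitzOnWith K f s) (hs : volume s = 0) : volume (f '' s) = 0 := by
  rw [← hausdorffMeasure_real] at hs ⊢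
  exact le_antisymm
    ((hf.hausdorffMeasure_image_le zero_le_one).trans (by rw [hs, mul_zero])) zero_le

theorem LipschitzWith.volume_image_null_of_addCircle {T : ℝ} [Fact (0 < T)] {K : NNReal}
    {f : AddCircle T → ℝ} (hf : LipschitzWith K f) {s : Set (AddCircle T)} (hs : volume s = 0) :
    volume (f '' s) = 0 := by
  set s₀ : Set ℝ := (↑) ⁻¹' s ∩ Ioc 0 (0 + T)
  have hs₀ : volume s₀ = 0 := by
    rw [← Measure.restrict_apply' measurableSet_Ioc]
    exact (AddCircle.measurePreserving_mk T 0).quasiMeasurePreserving.preimage_null hs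
  have himage : f '' s = (f ∘ (↑)) '' s₀ := by
    rw [image_comp, image_preimage_inter, AddCircle.coe_image_Ioc_eq, inter_univ]
  rw [himage]
  exact (hf.comp (AddCircle.lipschitzWith_coe T)).lipschitzOnWith.volume_image_null hs₀

section Disintegration

variable {X Y : Type*} [MeasurableSpace X] [MeasurableSpace Y] {μ : Measure X} {ν : Measure Y}
  {κ : Y → Measure X}

theorem ae_of_ae_disintegration (hdis : ∀ A, MeasurableSet A → μ A = ∫⁻ y, κ y A ∂ν)
    {p : X → Prop} (hp : MeasurableSet {x | p x}) (h : ∀ᵐ y ∂ν, ∀ᵐ x ∂κ y, p x) :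
    ∀ᵐ x ∂μ, p x := by
  rw [ae_iff]
  exact (hdis _ hp.compl).trans
    ((lintegral_congr_ae (h.mono fun y hy => ae_iff.mp hy)).trans lintegral_zero)

theorem exists_ae_eq_comp_of_disintegration {f : X → Y} (hf : Measurable f) {g : X → ℝ}
    (hg : Measurable g) (hκ : ∀ A, MeasurableSet A → Measurable fun y => κ y A)
    (hprob : ∀ᵐ y ∂ν, IsProbabilityMeasure (κ y)) (hfiber : ∀ᵐ y ∂ν, ∀ᵐ x ∂κ y, f x = y)
    (hdis : ∀ A, MeasurableSet A → μ A = ∫⁻ y, κ y A ∂ν)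
    (hconst : ∀ᵐ y ∂ν, ∃ c, ∀ᵐ x ∂κ y, g x = c) :
    ∃ ψ : Y → ℝ, ∀ᵐ x ∂μ, g x = ψ (f x) := by
  let η : ProbabilityTheory.Kernel Y X := ⟨κ, Measure.measurable_of_measurable_coe κ hκ⟩
  let ψ : Y → ℝ := fun y => ∫ x, g x ∂η y
  have hψ : Measurable ψ := hg.stronglyMeasurable.integral_kernel.measurable
  refine ⟨ψ, ae_of_ae_disintegration hdis (measurableSet_eq_fun hg (hψ.comp hf)) ?_⟩
  filter_upwards [hprob, hfiber, hconst] with y hy hfy ⟨c, hc⟩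
  have hψy : ψ y = c := by simp [ψ, η, integral_congr_ae hc]
  filter_upwards [hfy, hc] with x hx hgx
  rw [hx, hψy, hgx]

end Disintegration

theorem MeasureTheory.Measure.QuasiMeasurePreserving.ae_forall_iterate_eq {X Y : Type*}
    [MeasurableSpace X] {μ : Measure X} {T : X → X} (hT : QuasiMeasurePreserving T μ μ)
    {f : X → Y} {ψ : Y → Y} (h : ∀ᵐ x ∂μ, f (T x) = ψ (f x)) :
    ∀ᵐ x ∂μ, ∀ n, f (T^[n] x) = ψ^[n] (f x) := by
  have hall : ∀ᵐ x ∂μ, ∀ k, f (T (T^[k] x)) = ψ (f (T^[k] x)) :=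
    ae_all_iff.2 fun k => (hT.iterate k).ae h
  filter_upwards [hall] with x hx n
  induction n with
  | zero => rfl
  | succ n ih => rw [iterate_succ_apply', iterate_succ_apply', hx, ih]

theorem Function.Periodic.sub_of_forall_nsmul_eq {G X : Type*} [AddCommGroup G]
    [TopologicalSpace G] [IsTopologicalAddGroup G] [TopologicalSpace X] [T2Space X]
    {f : G → X} (hf : Continuous f) {β : G} (hβ : DenseRange fun n : ℕ => n • β) {t s : G}
    (hts : ∀ n : ℕ, f (t + n • β) = f (s + n • β)) : Periodic f (s - t) := by
  have horbit : DenseRange fun n : ℕ => t + n • β :=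
    (Homeomorph.addLeft t).surjective.denseRange.comp hβ (continuous_const_add t)
  refine congrFun (Continuous.ext_on horbit (hf.comp (continuous_add_const _)) hf ?_)
  rintro _ ⟨n, rfl⟩
  show f (t + n • β + (s - t)) = f (t + n • β)
  rw [hts n]
  congr 1
  abel

def Function.periods {α β : Type*} [AddGroup α] (f : α → β) : AddSubgroup α where
  carrier := {c | Periodic f c}
  zero_mem' := fun x => by rw [add_zero]
  add_mem' := Periodic.add_period
  neg_mem' := Periodic.neg

theorem Function.isClosed_periods {α β : Type*} [AddGroup α] [TopologicalSpace α]
    [ContinuousAdd α] [TopologicalSpace β] [T2Space β] {f : α → β} (hf : Continuous f) :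
    IsClosed (periods f : Set α) := by
  have : (periods f : Set α) = ⋂ x, {c | f (x + c) = f x} := by ext; simp [periods, Periodic]
  rw [this]
  exact isClosed_iInter fun x => isClosed_eq (hf.comp (continuous_const_add x)) continuous_const

theorem Continuous.exists_isLeast_pos_period {X : Type*} [TopologicalSpace X] [T2Space X]
    {f : ℝ → X} (hf : Continuous f) {c : ℝ} (hc : Periodic f c) (hc0 : c ≠ 0)
    (hne : ∀ d, ∃ x, f x ≠ d) : ∃ τ, IsLeast {g | Periodic f g ∧ 0 < g} τ := by
  by_contra hmin
  have hbot : periods f ≠ ⊥ := fun h => hc0 ((AddSubgroup.mem_bot).1 (h ▸ hc))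
  have huniv : (periods f : Set ℝ) = univ :=
    (isClosed_periods hf).closure_eq.symm.trans ((periods f).dense_of_no_min hbot hmin).closure_eq
  obtain ⟨x, hx⟩ := hne (f 0)
  have hxper : x ∈ (periods f : Set ℝ) := huniv ▸ mem_univ x
  exact hx (by simpa using hxper 0)

theorem Continuous.exists_eq_notMem_of_periodic {f : ℝ → ℝ} (hf : Continuous f) {τ : ℝ}
    (hτ : Periodic f τ) (hτ0 : 0 < τ) (hne : ∀ d, ∃ x, f x ≠ d) {N : Set ℝ}
    (hN : volume N = 0) : ∃ t₁ t₂, t₁ < t₂ ∧ t₂ < t₁ + τ ∧ f t₁ = f t₂ ∧ f t₁ ∉ N := by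
  have hrange := hτ.compact_of_continuous hτ0.ne' hf
  obtain ⟨_, ⟨p, rfl⟩, hp⟩ := hrange.exists_isGreatest (range_nonempty f)
  obtain ⟨_, ⟨w, rfl⟩, hw⟩ := hrange.exists_isLeast (range_nonempty f)
  obtain ⟨x, hx⟩ := hne (f p)
  have hwp : f w < f p := (hw ⟨x, rfl⟩).trans_lt ((hp ⟨x, rfl⟩).lt_of_ne hx)
  obtain ⟨w', hw', hww'⟩ := hτ.exists_mem_Ico hτ0 w p
  have hpw' : p < w' := hw'.1.lt_of_ne (by rintro rfl; exact hwp.ne hww')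
  obtain ⟨y, hy, hyN⟩ : (Ioo (f w) (f p) \ N).Nonempty :=
    nonempty_of_measure_ne_zero
      ((measure_sdiff_null hN).trans_ne ((Measure.measure_Ioo_pos volume).2 hwp).ne')
  rw [hww'] at hy
  obtain ⟨t₁, ht₁, rfl⟩ := intermediate_value_Ioo' hpw'.le hf.continuousOn hy
  rw [← hτ p] at hy
  obtain ⟨t₂, ht₂, heq⟩ := intermediate_value_Ioo hw'.2.le hf.continuousOn hy
  exact ⟨t₁, t₂, ht₁.2.trans ht₂.1, by linarith [ht₁.1, ht₂.2], heq.symm, hyN⟩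

theorem Continuous.exists_eq_notMem_not_periodic {f : ℝ → ℝ} (hf : Continuous f) {c : ℝ}
    (hc : Periodic f c) (hc0 : c ≠ 0) (hne : ∀ d, ∃ x, f x ≠ d) {N : Set ℝ}
    (hN : volume N = 0) : ∃ t₁ t₂, f t₁ = f t₂ ∧ f t₁ ∉ N ∧ ¬ Periodic f (t₂ - t₁) := by
  obtain ⟨τ, ⟨hτ, hτ0⟩, hτmin⟩ := hf.exists_isLeast_pos_period hc hc0 hne
  obtain ⟨t₁, t₂, hlt, hlt', heq, hN⟩ := hf.exists_eq_notMem_of_periodic hτ hτ0 hne hN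
  refine ⟨t₁, t₂, heq, hN, fun hper => ?_⟩
  linarith [hτmin ⟨hper, sub_pos.2 hlt⟩]

/-- Proposition 4.1: If `α` is irrational, `h : S¹ → ℝ` is Lipschitz, and for
`ν = h_* Leb`-a.e. `y` the conditional measure `μ_y` of Lebesgue measure with respect to `h`
makes `h ∘ R_α` almost surely constant, then `h` is constant. The conditional measures are
given as a disintegration of Lebesgue measure over the pushforward `ν`. -/
theorem stmt_3 (α : ℝ) (hα : Irrational α) (h : UnitAddCircle → ℝ) (K : NNReal)
    (hLip : LipschitzWith K h) (μy : ℝ → Measure UnitAddCircle)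
    (hmeas : ∀ A : Set UnitAddCircle, MeasurableSet A → Measurable fun y => μy y A)
    (hprob : ∀ᵐ y ∂(Measure.map h volume), IsProbabilityMeasure (μy y))
    (hfiber : ∀ᵐ y ∂(Measure.map h volume), ∀ᵐ t ∂(μy y), h t = y)
    (hdis : ∀ A : Set UnitAddCircle, MeasurableSet A →
      volume A = ∫⁻ y, μy y A ∂(Measure.map h volume))
    (hconst : ∀ᵐ y ∂(Measure.map h volume),
      ∃ c : ℝ, ∀ᵐ t ∂(μy y), h (t + ((α : ℝ) : UnitAddCircle)) = c) :
    ∃ c : ℝ, ∀ t, h t = c := by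
  by_contra hnc
  push Not at hnc
  set β : UnitAddCircle := (α : UnitAddCircle)
  have hcont := hLip.continuous
  obtain ⟨ψ, hψ⟩ := exists_ae_eq_comp_of_disintegration hcont.measurable
    (hcont.comp (continuous_add_const β)).measurable hmeas hprob hfiber hdis hconst
  have horbit := (measurePreserving_add_right volume β).quasiMeasurePreserving
    |>.ae_forall_iterate_eq hψ
  simp only [add_right_iterate] at horbit
  set F := {t | ∀ n : ℕ, h (t + n • β) = ψ^[n] (h t)}
  have hnc' : ∀ d, ∃ x : ℝ, h x ≠ d := fun d => by
    obtain ⟨t, ht⟩ := hnc d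
    obtain ⟨x, rfl⟩ := QuotientAddGroup.mk_surjective t
    exact ⟨x, ht⟩
  obtain ⟨t₁, t₂, heq, hnotin, hnper⟩ :=
    Continuous.exists_eq_notMem_not_periodic (f := fun x : ℝ => h x)
      (hcont.comp continuous_quotient_mk') (c := 1) (fun x => by simp) one_ne_zero hnc'
      (hLip.volume_image_null_of_addCircle (s := Fᶜ) horbit)
  have hF : ∀ t : ℝ, h t = h t₁ → (t : UnitAddCircle) ∈ F := fun t ht =>
    by_contra fun hF => hnotin ⟨t, hF, ht⟩
  have hdense : DenseRange fun n : ℕ => n • β :=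
    denseRange_zsmul_iff_nsmul.1 (AddCircle.denseRange_zsmul_coe_iff.2 (by simpa using hα))
  have hper := Periodic.sub_of_forall_nsmul_eq hcont hdense (t := (t₁ : UnitAddCircle)) (s := t₂)
    fun n => by rw [hF t₁ rfl n, hF t₂ heq.symm n, heq]
  exact hnper fun x => by simpa using hper x
end

section
/- Let T : X → X be a continuous map of a compact metric space, (ν_n)_{n≥0} a sequence of Borel probability measures on X, and A ⊆ ℕ a set of asymptotic density zero such that ν_{n+1} = T_* ν_n for all n ∉ A. Then every weak-* limit point of the Cesàro averages (1/m) Σ_{n=0}^{m−1} ν_n is a T-invariant probability measure. -/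
open MeasureTheory Filter Finset Topology
open scoped ENNReal BoundedContinuousFunction

/-!
Write `a n = ∫ h dν_n` and `b n = ∫ h ∘ T dν_n` for a bounded continuous `h`. Off `A` we have
`b n = a (n + 1)`, so `∑_{n<m} (b n - a n)` telescopes up to `2‖h‖` plus `2‖h‖ · #(A ∩ [0, m))`.
Dividing by `m`, density zero of `A` makes the Cesàro averages of `h ∘ T` and `h` asymptotically
equal, hence `∫ h ∘ T dμ = ∫ h dμ` for every weak-* limit point `μ`, and bounded continuous
functions determine finite Borel measures.
-/

section TelescopingOffDensityZero

variable {a b : ℕ → ℝ} {A : Set ℕ} {C : ℝ}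

lemma abs_sum_range_sub_le (ha : ∀ n, |a n| ≤ C) (hb : ∀ n, |b n| ≤ C)
    (hab : ∀ n ∉ A, b n = a (n + 1)) (m : ℕ) :
    |∑ n ∈ range m, (b n - a n)| ≤
      2 * C + 2 * C * ∑ n ∈ range m, A.indicator (fun _ => (1 : ℝ)) n := by
  have hdefect : ∀ n, |b n - a (n + 1)| ≤ 2 * C * A.indicator (fun _ => (1 : ℝ)) n := by
    intro n
    by_cases hn : n ∈ A
    · rw [Set.indicator_of_mem hn, mul_one, two_mul]
      exact (abs_sub _ _).trans (add_le_add (hb n) (ha (n + 1)))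
    · simp [Set.indicator_of_notMem hn, hab n hn]
  calc |∑ n ∈ range m, (b n - a n)|
      = |(a m - a 0) + ∑ n ∈ range m, (b n - a (n + 1))| := by
        rw [← sum_range_sub, ← sum_add_distrib]
        congr 1
        exact sum_congr rfl fun n _ => by ring
    _ ≤ |a m - a 0| + ∑ n ∈ range m, |b n - a (n + 1)| :=
        (abs_add_le _ _).trans (add_le_add_right (abs_sum_le_sum_abs _ _) _)
    _ ≤ 2 * C + 2 * C * ∑ n ∈ range m, A.indicator (fun _ => (1 : ℝ)) n := by
        rw [mul_sum]
        exact add_le_add ((abs_sub _ _).trans ((add_le_add (ha m) (ha 0)).trans_eq (two_mul C).symm))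
          (sum_le_sum fun n _ => hdefect n)

lemma tendsto_average_sub_of_eq_shift_off_densityZero (ha : ∀ n, |a n| ≤ C)
    (hb : ∀ n, |b n| ≤ C) (hab : ∀ n ∉ A, b n = a (n + 1))
    (hA : Tendsto (fun m : ℕ =>
      (∑ n ∈ range m, A.indicator (fun _ => (1 : ℝ)) n) / (m : ℝ)) atTop (𝓝 0)) :
    Tendsto (fun m : ℕ => (m : ℝ)⁻¹ * ∑ n ∈ range m, (b n - a n)) atTop (𝓝 0) := by
  set S : ℕ → ℝ := fun m => ∑ n ∈ range m, A.indicator (fun _ => (1 : ℝ)) n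
  have hbound : Tendsto (fun m : ℕ => 2 * C * (m : ℝ)⁻¹ + 2 * C * (S m / m)) atTop (𝓝 0) := by
    simpa using ((tendsto_inv_atTop_zero.comp tendsto_natCast_atTop_atTop).const_mul (2 * C)).add
      (hA.const_mul (2 * C))
  refine squeeze_zero_norm (fun m => ?_) hbound
  have hm : (0 : ℝ) ≤ (m : ℝ)⁻¹ := by positivity
  calc ‖(m : ℝ)⁻¹ * ∑ n ∈ range m, (b n - a n)‖
      = (m : ℝ)⁻¹ * |∑ n ∈ range m, (b n - a n)| := by
        rw [Real.norm_eq_abs, abs_mul, abs_of_nonneg hm]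
    _ ≤ (m : ℝ)⁻¹ * (2 * C + 2 * C * S m) :=
        mul_le_mul_of_nonneg_left (abs_sum_range_sub_le ha hb hab m) hm
    _ = 2 * C * (m : ℝ)⁻¹ + 2 * C * (S m / m) := by ring

end TelescopingOffDensityZero

section CesaroAverage

variable {X : Type*} [MeasurableSpace X]

noncomputable def cesaroAverage (ν : ℕ → Measure X) (m : ℕ) : Measure X :=
  (m : ℝ≥0∞)⁻¹ • ∑ n ∈ range m, ν n

lemma integral_cesaroAverage (ν : ℕ → Measure X) {f : X → ℝ} (hf : ∀ n, Integrable f (ν n))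
    (m : ℕ) :
    ∫ x, f x ∂cesaroAverage ν m = (m : ℝ)⁻¹ * ∑ n ∈ range m, ∫ x, f x ∂ν n := by
  rw [cesaroAverage, integral_smul_measure, integral_finsetSum_measure fun n _ => hf n]
  simp [ENNReal.toReal_inv]

lemma integral_one_cesaroAverage (ν : ℕ → Measure X) [∀ n, IsProbabilityMeasure (ν n)] {m : ℕ}
    (hm : m ≠ 0) : ∫ _, (1 : ℝ) ∂cesaroAverage ν m = 1 := by
  rw [integral_cesaroAverage ν fun n => integrable_const 1]
  simp [hm]

lemma isProbabilityMeasure_of_tendsto_integral_cesaroAverage {ν : ℕ → Measure X}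
    [∀ n, IsProbabilityMeasure (ν n)] {μ : Measure X} {φ : ℕ → ℕ}
    (hφ : Tendsto φ atTop atTop)
    (hconv : Tendsto (fun k => ∫ _, (1 : ℝ) ∂cesaroAverage ν (φ k)) atTop (𝓝 (∫ _, (1 : ℝ) ∂μ))) :
    IsProbabilityMeasure μ := by
  have hone : ∀ᶠ k in atTop, ∫ _, (1 : ℝ) ∂cesaroAverage ν (φ k) = 1 := by
    filter_upwards [hφ.eventually_ge_atTop 1] with k hk
    exact integral_one_cesaroAverage ν (by omega)
  have h := tendsto_nhds_unique hconv (tendsto_const_nhds.congr' (hone.mono fun _ h => h.symm))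
  rw [integral_const, smul_eq_mul, mul_one] at h
  exact isProbabilityMeasure_iff_real.2 h

end CesaroAverage

section Invariance

variable {X : Type*} [TopologicalSpace X] [MeasurableSpace X] [BorelSpace X]

lemma integral_comp_eq_of_tendsto_cesaroAverage {T : X → X} (hT : Continuous T)
    {ν : ℕ → Measure X} [∀ n, IsProbabilityMeasure (ν n)] {A : Set ℕ}
    (hA : Tendsto (fun m : ℕ =>
      (∑ n ∈ range m, A.indicator (fun _ => (1 : ℝ)) n) / (m : ℝ)) atTop (𝓝 0))
    (hmap : ∀ n ∉ A, ν (n + 1) = Measure.map T (ν n)) {μ : Measure X} {φ : ℕ → ℕ}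
    (hφ : Tendsto φ atTop atTop)
    (hconv : ∀ f : X →ᵇ ℝ,
      Tendsto (fun k => ∫ x, f x ∂cesaroAverage ν (φ k)) atTop (𝓝 (∫ x, f x ∂μ)))
    (h : X →ᵇ ℝ) :
    ∫ x, h (T x) ∂μ = ∫ x, h x ∂μ := by
  set g := h.compContinuous ⟨T, hT⟩
  have hshift : ∀ n ∉ A, ∫ x, g x ∂ν n = ∫ x, h x ∂ν (n + 1) := fun n hn => by
    rw [hmap n hn, integral_map hT.aemeasurable h.continuous.aestronglyMeasurable]
    rfl
  have hsmall := (tendsto_average_sub_of_eq_shift_off_densityZero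
    (fun n => h.norm_integral_le_norm (ν n))
    (fun n => (g.norm_integral_le_norm (ν n)).trans (h.norm_compContinuous_le _))
    hshift hA).comp hφ
  have hdiff := (hconv g).sub (hconv h)
  simp only [integral_cesaroAverage ν fun n => BoundedContinuousFunction.integrable (ν n) _,
    ← mul_sub, ← sum_sub_distrib] at hdiff
  exact sub_eq_zero.1 (tendsto_nhds_unique hdiff hsmall)

end Invariance

theorem stmt_12_general {X : Type*} [MetricSpace X]
    [MeasurableSpace X] [BorelSpace X]
    (T : X → X) (hT : Continuous T) (ν : ℕ → Measure X)
    (hν : ∀ n, IsProbabilityMeasure (ν n)) (A : Set ℕ)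
    (hA : Tendsto (fun m : ℕ =>
      (∑ n ∈ Finset.range m, A.indicator (fun _ => (1 : ℝ)) n) / (m : ℝ)) atTop (nhds 0))
    (hmap : ∀ n ∉ A, ν (n + 1) = Measure.map T (ν n))
    (μ : Measure X) (φ : ℕ → ℕ) (hφ : StrictMono φ)
    (hconv : ∀ f : X → ℝ, Continuous f →
      Tendsto (fun k : ℕ =>
          ∫ x, f x ∂(((φ k : ENNReal))⁻¹ • ∑ n ∈ Finset.range (φ k), ν n))
        atTop (nhds (∫ x, f x ∂μ))) :
    IsProbabilityMeasure μ ∧ Measure.map T μ = μ := by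
  have hφ_top := hφ.tendsto_atTop
  have hμ : IsProbabilityMeasure μ :=
    isProbabilityMeasure_of_tendsto_integral_cesaroAverage hφ_top (hconv _ continuous_const)
  have : IsProbabilityMeasure (Measure.map T μ) := Measure.isProbabilityMeasure_map hT.aemeasurable
  refine ⟨hμ, ext_of_forall_integral_eq_of_IsFiniteMeasure fun f => ?_⟩
  rw [integral_map hT.aemeasurable f.continuous.aestronglyMeasurable]
  exact integral_comp_eq_of_tendsto_cesaroAverage hT hA hmap hφ_top
    (fun g => hconv g g.continuous) f

/-- Lemma 4.7: Let `T` be a continuous map of a compact metric space,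
`(ν_n)` Borel probability measures with `ν_{n+1} = T_* ν_n` for `n` outside a set `A` of
asymptotic density zero. Then any weak-* limit point of the Cesàro averages
`(1/m) Σ_{n<m} ν_n` is a `T`-invariant probability measure. -/
theorem stmt_12 {X : Type*} [MetricSpace X] [CompactSpace X]
    [MeasurableSpace X] [BorelSpace X]
    (T : X → X) (hT : Continuous T) (ν : ℕ → Measure X)
    (hν : ∀ n, IsProbabilityMeasure (ν n)) (A : Set ℕ)
    (hA : Tendsto (fun m : ℕ =>
      (∑ n ∈ Finset.range m, A.indicator (fun _ => (1 : ℝ)) n) / (m : ℝ)) atTop (nhds 0))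
    (hmap : ∀ n ∉ A, ν (n + 1) = Measure.map T (ν n))
    (μ : Measure X) (φ : ℕ → ℕ) (hφ : StrictMono φ)
    (hconv : ∀ f : X → ℝ, Continuous f →
      Tendsto (fun k : ℕ =>
          ∫ x, f x ∂(((φ k : ENNReal))⁻¹ • ∑ n ∈ Finset.range (φ k), ν n))
        atTop (nhds (∫ x, f x ∂μ))) :
    IsProbabilityMeasure μ ∧ Measure.map T μ = μ :=
  stmt_12_general T hT ν hν A hA hmap μ φ hφ hconv
end
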